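/- Key inequality for bilinear sharpness: for H = [[0, Aᵀ],[A, 0]] ∈ ℝ^{(n+m)×(n+m)} and z = (x,y), ‖Hz − (c,b)‖₂² = ‖Aᵀy − c‖₂² + ‖Ax − b‖₂² ≥ σ_min⁺(A)²·dist(z, Z*)², where Z* = {z : Hz = (c,b)} is assumed nonempty. -/

import Mathlib

/-!
Since `H` is symmetric and `Z* = z₀ + ker H`, expanding `z - z₀` in an orthonormal eigenbasis of
`H` gives `‖Hz - (c,b)‖² ≥ s · dist(z, Z*)²` as soon as `s ≤ ν²` for every nonzero eigenvalue `ν`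
of `H`. For an eigenvector `(p, q)` of `H` with eigenvalue `ν ≠ 0` we have `Aᵀq = νp` and
`Ap = νq`, so `p ≠ 0` and `AᵀA p = ν² p`: thus `ν²` is a nonzero eigenvalue of `AᵀA`, hence at
least `σ_min⁺(A)²`.
-/

open scoped Matrix

/-- The minimum nonzero singular value of a real matrix `A`. -/
noncomputable def sigmaMinPos {m n : Type*} [Fintype m] [Fintype n] [DecidableEq n]
    (H : Matrix m n ℝ) : ℝ :=
  Real.sqrt (sInf {μ : ℝ | μ ≠ 0 ∧
    ∃ i, (Matrix.isHermitian_conjTranspose_mul_self H).eigenvalues i = μ})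

open Module.End

theorem LinearMap.IsSymmetric.exists_mem_ker_mul_norm_sub_sq_le {𝕜 E : Type*} [RCLike 𝕜]
    [NormedAddCommGroup E] [InnerProductSpace 𝕜 E] [FiniteDimensional 𝕜 E] {T : E →ₗ[𝕜] E}
    (hT : T.IsSymmetric) {s : ℝ} (hs : ∀ μ : ℝ, HasEigenvalue T μ → μ ≠ 0 → s ≤ μ ^ 2)
    (u : E) : ∃ k ∈ LinearMap.ker T, s * ‖u - k‖ ^ 2 ≤ ‖T u‖ ^ 2 := by
  classical
  set b := hT.eigenvectorBasis rfl
  set k := b.repr.symm (WithLp.toLp 2 fun i => if hT.eigenvalues rfl i = 0 then b.repr u i else 0)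
  have repr_k (i) : b.repr k i = if hT.eigenvalues rfl i = 0 then b.repr u i else 0 := by
    simp [k]
  refine ⟨k, ?_, ?_⟩
  · rw [LinearMap.mem_ker, ← b.repr.map_eq_zero_iff]
    ext i
    rw [hT.eigenvectorBasis_apply_self_apply, repr_k]
    split_ifs with h <;> simp [h]
  · rw [← b.repr.norm_map, ← b.repr.norm_map, EuclideanSpace.norm_sq_eq,
      EuclideanSpace.norm_sq_eq, Finset.mul_sum]
    refine Finset.sum_le_sum fun i _ => ?_
    rw [hT.eigenvectorBasis_apply_self_apply, map_sub, PiLp.sub_apply, repr_k, norm_mul, mul_pow,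
      RCLike.norm_ofReal, sq_abs]
    split_ifs with h
    · simp [h]
    · simpa using mul_le_mul_of_nonneg_right (hs _ (hT.hasEigenvalue_eigenvalues rfl i) h)
        (sq_nonneg ‖b.repr u i‖)

theorem Matrix.sq_mem_spectrum_transpose_mul_self_of_mem_spectrum_fromBlocks {K m n : Type*}
    [Field K] [Fintype m] [Fintype n] [DecidableEq m] [DecidableEq n] (A : Matrix m n K) {ν : K}
    (hν : ν ≠ 0) (h : ν ∈ spectrum K (fromBlocks 0 Aᵀ A 0)) : ν ^ 2 ∈ spectrum K (Aᵀ * A) := by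
  rw [← spectrum_toLin', ← hasEigenvalue_iff_mem_spectrum] at h ⊢
  obtain ⟨v, hv⟩ := h.exists_hasEigenvector
  have hHv : fromBlocks 0 Aᵀ A 0 *ᵥ v = ν • v := hv.apply_eq_smul
  have hAtq : Aᵀ *ᵥ (v ∘ Sum.inr) = ν • (v ∘ Sum.inl) := funext fun i => by
    simpa [fromBlocks_mulVec] using congrFun hHv (Sum.inl i)
  have hAp : A *ᵥ (v ∘ Sum.inl) = ν • (v ∘ Sum.inr) := funext fun j => by
    simpa [fromBlocks_mulVec] using congrFun hHv (Sum.inr j)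
  have hp : v ∘ Sum.inl ≠ 0 := by
    intro hp
    have hq : v ∘ Sum.inr = 0 := by simpa [hp, hν] using hAp.symm
    exact hv.2 (funext (Sum.rec (congrFun hp) (congrFun hq)))
  refine hasEigenvalue_of_hasEigenvector ⟨mem_eigenspace_iff.2 ?_, hp⟩
  rw [toLin'_apply, ← mulVec_mulVec, hAp, mulVec_smul, hAtq, smul_smul, sq]

theorem sq_sigmaMinPos_le {m n : Type*} [Fintype m] [Fintype n] [DecidableEq n]
    (A : Matrix m n ℝ) {μ : ℝ} (hμ : μ ≠ 0) (h : μ ∈ spectrum ℝ (Aᴴ * A)) :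
    sigmaMinPos A ^ 2 ≤ μ := by
  have hAA := Matrix.isHermitian_conjTranspose_mul_self A
  obtain ⟨i, rfl⟩ : μ ∈ Set.range hAA.eigenvalues := hAA.spectrum_real_eq_range_eigenvalues ▸ h
  have hbdd : BddBelow {μ : ℝ | μ ≠ 0 ∧ ∃ i, hAA.eigenvalues i = μ} :=
    ((Set.finite_range hAA.eigenvalues).subset fun _ h => h.2).bddBelow
  have hnonneg : 0 ≤ sInf {μ : ℝ | μ ≠ 0 ∧ ∃ i, hAA.eigenvalues i = μ} :=
    Real.sInf_nonneg fun _ ⟨_, j, hj⟩ =>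
      hj ▸ (Matrix.posSemidef_conjTranspose_mul_self A).eigenvalues_nonneg j
  rw [sigmaMinPos, Real.sq_sqrt hnonneg]
  exact csInf_le hbdd ⟨hμ, i, rfl⟩

theorem EuclideanSpace.norm_sq_eq_add_of_inl_inr {𝕜 ι κ : Type*} [RCLike 𝕜] [Fintype ι]
    [Fintype κ] {w : EuclideanSpace 𝕜 (ι ⊕ κ)} {p : EuclideanSpace 𝕜 ι} {q : EuclideanSpace 𝕜 κ}
    (hp : ∀ i, w (Sum.inl i) = p i) (hq : ∀ j, w (Sum.inr j) = q j) :
    ‖w‖ ^ 2 = ‖p‖ ^ 2 + ‖q‖ ^ 2 := by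
  simp only [EuclideanSpace.norm_sq_eq, Fintype.sum_sum_type, hp, hq]

/-- For `H = [[0, Aᵀ],[A, 0]]` and `z = (x,y)`,
`‖Hz − (c,b)‖₂² = ‖Aᵀy − c‖₂² + ‖Ax − b‖₂² ≥ σ_min⁺(A)² · dist(z, Z*)²`, where
`Z* = {z : Hz = (c,b)}` is assumed nonempty. -/
theorem bilinear_residual_ge_sharp_dist {n m : ℕ} (A : Matrix (Fin m) (Fin n) ℝ)
    (c : EuclideanSpace ℝ (Fin n)) (b : EuclideanSpace ℝ (Fin m))
    (H : Matrix (Fin n ⊕ Fin m) (Fin n ⊕ Fin m) ℝ)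
    (hH : H = Matrix.fromBlocks 0 Aᵀ A 0)
    (cb : EuclideanSpace ℝ (Fin n ⊕ Fin m))
    (hcb : cb = (EuclideanSpace.equiv (Fin n ⊕ Fin m) ℝ).symm (Sum.elim c b))
    (Zstar : Set (EuclideanSpace ℝ (Fin n ⊕ Fin m)))
    (hZstar : Zstar = {w | Matrix.toEuclideanLin H w = cb})
    (hne : Zstar.Nonempty)
    (z : EuclideanSpace ℝ (Fin n ⊕ Fin m))
    (x : EuclideanSpace ℝ (Fin n)) (hx : x = (EuclideanSpace.equiv (Fin n) ℝ).symm (fun i => z (Sum.inl i)))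
    (y : EuclideanSpace ℝ (Fin m)) (hy : y = (EuclideanSpace.equiv (Fin m) ℝ).symm (fun j => z (Sum.inr j))) :
    ‖Matrix.toEuclideanLin H z - cb‖ ^ 2 =
      ‖Matrix.toEuclideanLin Aᵀ y - c‖ ^ 2 + ‖Matrix.toEuclideanLin A x - b‖ ^ 2 ∧
    sigmaMinPos A ^ 2 * Metric.infDist z Zstar ^ 2 ≤
      ‖Matrix.toEuclideanLin Aᵀ y - c‖ ^ 2 + ‖Matrix.toEuclideanLin A x - b‖ ^ 2 := by
  have hresidual : ‖Matrix.toEuclideanLin H z - cb‖ ^ 2 =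
      ‖Matrix.toEuclideanLin Aᵀ y - c‖ ^ 2 + ‖Matrix.toEuclideanLin A x - b‖ ^ 2 :=
    EuclideanSpace.norm_sq_eq_add_of_inl_inr
      (fun i => by
        simp [hH, hy, hcb, Matrix.toLpLin_apply, Matrix.fromBlocks_mulVec, Function.comp_def])
      (fun j => by
        simp [hH, hx, hcb, Matrix.toLpLin_apply, Matrix.fromBlocks_mulVec, Function.comp_def])
  refine ⟨hresidual, hresidual ▸ ?_⟩
  obtain ⟨z₀, hz₀ : Matrix.toEuclideanLin H z₀ = cb⟩ := hZstar ▸ hne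
  have hsymm : (Matrix.toEuclideanLin H).IsSymmetric :=
    Matrix.isSymmetric_toEuclideanLin_iff.2 (by
      simp [hH, Matrix.IsHermitian, Matrix.fromBlocks_transpose])
  have hev (μ : ℝ) (hμ : HasEigenvalue (Matrix.toEuclideanLin H) μ) (hμ0 : μ ≠ 0) :
      sigmaMinPos A ^ 2 ≤ μ ^ 2 := by
    refine sq_sigmaMinPos_le A (pow_ne_zero 2 hμ0) ?_
    rw [Matrix.conjTranspose_eq_transpose_of_trivial]
    refine A.sq_mem_spectrum_transpose_mul_self_of_mem_spectrum_fromBlocks hμ0 ?_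
    rw [← hH, ← Matrix.spectrum_toLpLin 2]
    exact hμ.mem_spectrum
  obtain ⟨k, hk, hle⟩ := hsymm.exists_mem_ker_mul_norm_sub_sq_le hev (z - z₀)
  have hmem : z₀ + k ∈ Zstar := by
    rw [hZstar, Set.mem_ofPred_eq, map_add, hz₀, LinearMap.mem_ker.1 hk, add_zero]
  calc sigmaMinPos A ^ 2 * Metric.infDist z Zstar ^ 2
      ≤ sigmaMinPos A ^ 2 * ‖z - z₀ - k‖ ^ 2 := by
        gcongr
        · exact Metric.infDist_nonneg
        · simpa [dist_eq_norm, sub_add_eq_sub_sub] using Metric.infDist_le_dist_of_mem hmem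
    _ ≤ ‖Matrix.toEuclideanLin H (z - z₀)‖ ^ 2 := hle
    _ = ‖Matrix.toEuclideanLin H z - cb‖ ^ 2 := by rw [map_sub, hz₀]
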